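/- arXiv:2010.13195 — 2 statements merged into one kernel-verified Lean document; each statement's English description precedes it below -/
import Mathlib

section
/- Let R¹ be one of the four open regions formed by two crossing chords of the unit disk meeting at c, with adjacent regions R² and R⁴ and opposite region R³. Let C be a convex subset of the open unit disk with c ∉ C. Then C \ R¹ has at most two connected components; moreover if it has exactly two components, these components are C ∩ closure(R²) and C ∩ closure(R⁴), and each is convex. -/
/-- The cross product (signed area form) of two vectors in the plane. -/
def crossP (u v : ℝ × ℝ) : ℝ := u.1 * v.2 - u.2 * v.1

/-- The open unit disk in the plane. -/
def unitDisk : Set (ℝ × ℝ) := {p | p.1 ^ 2 + p.2 ^ 2 < 1}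

/-!
Put `A = C ∩ {crossP u (· - c) ≤ 0}` and `B = C ∩ {crossP v (· - c) ≤ 0}`; then `C \ R¹ = A ∪ B`
is a union of two convex sets. Unless `A` and `B` are nonempty and disjoint, `A ∪ B` is
preconnected. If they are, every point of `A` has `crossP v (· - c) > 0` and every point of `B`
has `crossP u (· - c) > 0`, so these two open half-planes separate `A` from `B` inside `A ∪ B`
and `A`, `B` are the two components. In that case `A` lies in the open set
`unitDisk ∩ {crossP v (· - c) > 0}`, in which the closure of `R²` is cut out by
`crossP u (· - c) ≤ 0`; hence `A = C ∩ closure R²`, and likewise `B = C ∩ closure R⁴`.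
-/

open Set

theorem diff_inter_setOf_pos_and_pos {X : Type*} {C O : Set X} (hCO : C ⊆ O) (f g : X → ℝ) :
    C \ (O ∩ {x | f x > 0 ∧ g x > 0}) = C ∩ {x | f x ≤ 0} ∪ C ∩ {x | g x ≤ 0} := by
  ext x
  simp only [mem_sdiff, mem_inter_iff, mem_ofPred_eq, mem_union, not_and, not_lt]
  constructor
  · rintro ⟨hxC, hx⟩
    by_cases hf : f x ≤ 0
    · exact Or.inl ⟨hxC, hf⟩
    · exact Or.inr ⟨hxC, hx (hCO hxC) (lt_of_not_ge hf)⟩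
  · rintro (⟨hxC, hf⟩ | ⟨hxC, hg⟩)
    · exact ⟨hxC, fun _ hf' => absurd hf' (not_lt.2 hf)⟩
    · exact ⟨hxC, fun _ _ => hg⟩

theorem inter_setOf_nonpos_subset_of_disjoint {X : Type*} {C : Set X} {f g : X → ℝ}
    (h : Disjoint (C ∩ {x | f x ≤ 0}) (C ∩ {x | g x ≤ 0})) :
    C ∩ {x | f x ≤ 0} ⊆ {x | 0 < g x} := fun x hx =>
  show 0 < g x from lt_of_not_ge fun hg => h.notMem_of_mem_left hx ⟨hx.1, hg⟩

section Topology

variable {X : Type*} [TopologicalSpace X]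

theorem inter_closure_inter_setOf_neg {f : X → ℝ} (hfo : IsOpenMap f) (hfc : Continuous f)
    {C O : Set X} (hO : IsOpen O) (hCO : C ∩ {x | f x ≤ 0} ⊆ O) :
    C ∩ closure (O ∩ {x | f x < 0}) = C ∩ {x | f x ≤ 0} := by
  have hcl : closure {x | f x < 0} = {x | f x ≤ 0} := by
    change closure (f ⁻¹' Iio 0) = f ⁻¹' Iic 0
    rw [← hfo.preimage_closure_eq_closure_preimage hfc, closure_Iio]
  refine subset_antisymm
    (inter_subset_inter_right C ((closure_mono inter_subset_right).trans hcl.subset)) ?_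
  intro x hx
  exact ⟨hx.1, hO.inter_closure ⟨hCO hx, hcl.symm ▸ hx.2⟩⟩

def componentsIn (S : Set X) : Set (Set X) := {T | ∃ x ∈ S, T = connectedComponentIn S x}

theorem IsPreconnected.ncard_componentsIn_le_one {S : Set X} (hS : IsPreconnected S) :
    (componentsIn S).ncard ≤ 1 := by
  have hsub : componentsIn S ⊆ {S} := by
    rintro T ⟨x, hx, rfl⟩
    exact hS.connectedComponentIn hx
  simpa using ncard_le_ncard hsub

theorem IsPreconnected.union_of_imp_not_disjoint {A B : Set X} (hA : IsPreconnected A)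
    (hB : IsPreconnected B) (h : A.Nonempty → B.Nonempty → ¬Disjoint A B) :
    IsPreconnected (A ∪ B) := by
  rcases A.eq_empty_or_nonempty with rfl | hAne
  · simpa using hB
  rcases B.eq_empty_or_nonempty with rfl | hBne
  · simpa using hA
  obtain ⟨x, hxA, hxB⟩ := not_disjoint_iff.1 (h hAne hBne)
  exact hA.union x hxA hxB hB

variable {A B U V : Set X}

theorem connectedComponentIn_union_eq_left (hA : IsPreconnected A) (hU : IsOpen U)
    (hV : IsOpen V) (hAU : A ⊆ U) (hBV : B ⊆ V) (hAV : Disjoint A V) (hBU : Disjoint B U)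
    {x : X} (hx : x ∈ A) : connectedComponentIn (A ∪ B) x = A := by
  refine subset_antisymm ?_ (hA.subset_connectedComponentIn hx subset_union_left)
  set K := connectedComponentIn (A ∪ B) x
  have hKAB : K ⊆ A ∪ B := connectedComponentIn_subset _ _
  have hKUV : K ∩ (U ∩ V) = ∅ := by
    refine eq_empty_of_forall_notMem fun y ⟨hyK, hyU, hyV⟩ => ?_
    rcases hKAB hyK with hyA | hyB
    · exact hAV.notMem_of_mem_left hyA hyV
    · exact hBU.notMem_of_mem_left hyB hyU
  have hxK : x ∈ K := mem_connectedComponentIn (Or.inl hx)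
  rcases isPreconnected_iff_subset_of_disjoint.1 isPreconnected_connectedComponentIn U V hU hV
    (hKAB.trans (union_subset_union hAU hBV)) hKUV with hKU | hKV
  · intro y hyK
    exact (hKAB hyK).resolve_right fun hyB => hBU.notMem_of_mem_left hyB (hKU hyK)
  · exact absurd (hKV hxK) (hAV.notMem_of_mem_left hx)

theorem componentsIn_union_of_separated (hA : IsPreconnected A) (hB : IsPreconnected B)
    (hAne : A.Nonempty) (hBne : B.Nonempty) (hU : IsOpen U) (hV : IsOpen V) (hAU : A ⊆ U)
    (hBV : B ⊆ V) (hAV : Disjoint A V) (hBU : Disjoint B U) :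
    componentsIn (A ∪ B) = {A, B} := by
  have hcompA : ∀ x ∈ A, connectedComponentIn (A ∪ B) x = A := fun x hx =>
    connectedComponentIn_union_eq_left hA hU hV hAU hBV hAV hBU hx
  have hcompB : ∀ x ∈ B, connectedComponentIn (A ∪ B) x = B := fun x hx => by
    rw [union_comm]
    exact connectedComponentIn_union_eq_left hB hV hU hBV hAU hBU hAV hx
  ext T
  constructor
  · rintro ⟨x, hxA | hxB, rfl⟩
    · exact Or.inl (hcompA x hxA)
    · exact Or.inr (hcompB x hxB)
  · rintro (rfl | rfl)
    · obtain ⟨x, hx⟩ := hAne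
      exact ⟨x, Or.inl hx, (hcompA x hx).symm⟩
    · obtain ⟨x, hx⟩ := hBne
      exact ⟨x, Or.inr hx, (hcompB x hx).symm⟩

theorem componentsIn_union_inter_setOf_nonpos {f g : X → ℝ} (hf : Continuous f)
    (hg : Continuous g) {C : Set X} (hA : IsPreconnected (C ∩ {x | f x ≤ 0}))
    (hB : IsPreconnected (C ∩ {x | g x ≤ 0})) (hAne : (C ∩ {x | f x ≤ 0}).Nonempty)
    (hBne : (C ∩ {x | g x ≤ 0}).Nonempty)
    (hAB : Disjoint (C ∩ {x | f x ≤ 0}) (C ∩ {x | g x ≤ 0})) :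
    componentsIn (C ∩ {x | f x ≤ 0} ∪ C ∩ {x | g x ≤ 0}) =
      {C ∩ {x | f x ≤ 0}, C ∩ {x | g x ≤ 0}} :=
  componentsIn_union_of_separated hA hB hAne hBne (isOpen_lt continuous_const hg)
    (isOpen_lt continuous_const hf) (inter_setOf_nonpos_subset_of_disjoint hAB)
    (inter_setOf_nonpos_subset_of_disjoint hAB.symm)
    (disjoint_left.2 fun _ ⟨_, (hx : f _ ≤ 0)⟩ hx' => hx.not_gt hx')
    (disjoint_left.2 fun _ ⟨_, (hx : g _ ≤ 0)⟩ hx' => hx.not_gt hx')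

end Topology

def crossPLinear (u : ℝ × ℝ) : ℝ × ℝ →ₗ[ℝ] ℝ :=
  u.1 • LinearMap.snd ℝ ℝ ℝ - u.2 • LinearMap.fst ℝ ℝ ℝ

theorem crossPLinear_apply (u x : ℝ × ℝ) : crossPLinear u x = crossP u x := by
  simp [crossPLinear, crossP]

theorem crossPLinear_surjective {u : ℝ × ℝ} (hu : u ≠ 0) :
    Function.Surjective (crossPLinear u) := by
  refine LinearMap.surjective_iff_ne_zero.2 fun h => hu (Prod.ext ?_ ?_)
  · simpa [crossPLinear] using LinearMap.congr_fun h (0, 1)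
  · simpa [crossPLinear] using LinearMap.congr_fun h (1, 0)

theorem crossP_sub_eq (u c x : ℝ × ℝ) :
    crossP u (x - c) = crossPLinear u x - crossPLinear u c := by
  rw [← map_sub, crossPLinear_apply]

theorem continuous_crossP_sub (u c : ℝ × ℝ) : Continuous fun x => crossP u (x - c) := by
  unfold crossP
  fun_prop

theorem isOpenMap_crossP_sub {u : ℝ × ℝ} (hu : u ≠ 0) (c : ℝ × ℝ) :
    IsOpenMap fun x => crossP u (x - c) := by
  have h := ((crossPLinear u).isOpenMap_of_finiteDimensional (crossPLinear_surjective hu)).comp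
    (Homeomorph.subRight c).isOpenMap
  convert h using 1
  ext x
  simp [crossPLinear_apply]

theorem convex_setOf_crossP_sub_nonpos (u c : ℝ × ℝ) :
    Convex ℝ {x | crossP u (x - c) ≤ 0} := by
  simp only [crossP_sub_eq, sub_nonpos]
  exact convex_halfSpace_le (crossPLinear u).isLinear _

theorem isOpen_unitDisk : IsOpen unitDisk :=
  isOpen_lt (by fun_prop) continuous_const

theorem inter_closure_quadrant {u : ℝ × ℝ} (hu : u ≠ 0) (c v : ℝ × ℝ) {C : Set (ℝ × ℝ)}
    (hCd : C ⊆ unitDisk) (hCv : C ∩ {x | crossP u (x - c) ≤ 0} ⊆ {x | 0 < crossP v (x - c)}) :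
    C ∩ closure (unitDisk ∩ {x | crossP u (x - c) < 0 ∧ crossP v (x - c) > 0}) =
      C ∩ {x | crossP u (x - c) ≤ 0} := by
  rw [ofPred_and, inter_comm {x | crossP u (x - c) < 0}, ← inter_assoc]
  exact inter_closure_inter_setOf_neg (isOpenMap_crossP_sub hu c) (continuous_crossP_sub u c)
    (isOpen_unitDisk.inter (isOpen_lt continuous_const (continuous_crossP_sub v c)))
    fun x hx => ⟨hCd hx.1, hCv hx⟩

theorem diff_region_components_general (c u v : ℝ × ℝ)
    (hu : u ≠ 0) (hv : v ≠ 0)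
    (R1 R2 R4 : Set (ℝ × ℝ))
    (hR1 : R1 = unitDisk ∩ {x | crossP u (x - c) > 0 ∧ crossP v (x - c) > 0})
    (hR2 : R2 = unitDisk ∩ {x | crossP u (x - c) < 0 ∧ crossP v (x - c) > 0})
    (hR4 : R4 = unitDisk ∩ {x | crossP u (x - c) > 0 ∧ crossP v (x - c) < 0})
    (C : Set (ℝ × ℝ)) (hC : Convex ℝ C) (hCd : C ⊆ unitDisk)
    (comps : Set (Set (ℝ × ℝ)))
    (hcomps : comps = {T | ∃ x ∈ C \ R1, T = connectedComponentIn (C \ R1) x}) :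
    comps.ncard ≤ 2 ∧
      (comps.ncard = 2 →
        comps = {C ∩ closure R2, C ∩ closure R4} ∧
        Convex ℝ (C ∩ closure R2) ∧ Convex ℝ (C ∩ closure R4)) := by
  set A := C ∩ {x | crossP u (x - c) ≤ 0}
  set B := C ∩ {x | crossP v (x - c) ≤ 0}
  have hA : Convex ℝ A := hC.inter (convex_setOf_crossP_sub_nonpos u c)
  have hB : Convex ℝ B := hC.inter (convex_setOf_crossP_sub_nonpos v c)
  have hcompsAB : comps = componentsIn (A ∪ B) := by
    rw [hcomps, hR1, diff_inter_setOf_pos_and_pos hCd]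
    rfl
  by_cases hsep : A.Nonempty ∧ B.Nonempty ∧ Disjoint A B
  · obtain ⟨hAne, hBne, hAB⟩ := hsep
    have hA2 : C ∩ closure R2 = A := by
      rw [hR2]
      exact inter_closure_quadrant hu c v hCd (inter_setOf_nonpos_subset_of_disjoint hAB)
    have hB4 : C ∩ closure R4 = B := by
      rw [hR4]
      simp only [and_comm (a := crossP u _ > 0)]
      exact inter_closure_quadrant hv c u hCd (inter_setOf_nonpos_subset_of_disjoint hAB.symm)
    have hAneB : A ≠ B := fun h => hAne.ne_empty (hAB.eq_bot_of_le (h ▸ le_rfl))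
    rw [hcompsAB, componentsIn_union_inter_setOf_nonpos (continuous_crossP_sub u c)
      (continuous_crossP_sub v c) hA.isPreconnected hB.isPreconnected hAne hBne hAB,
      ncard_pair hAneB, hA2, hB4]
    exact ⟨le_rfl, fun _ => ⟨rfl, hA, hB⟩⟩
  · have hle := (hA.isPreconnected.union_of_imp_not_disjoint hB.isPreconnected
      fun hAne hBne hAB => hsep ⟨hAne, hBne, hAB⟩).ncard_componentsIn_le_one
    rw [← hcompsAB] at hle
    exact ⟨hle.trans one_le_two, fun h => by omega⟩

/-- let `R¹, R², R³, R⁴` (in cyclic order) be the four open regions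
of the open unit disk determined by two chords crossing at `c`, and let `C` be a
convex subset of the open disk with `c ∉ C`.  Then `C \ R¹` has at most two
connected components; if it has exactly two, they are `C ∩ closure R²` and
`C ∩ closure R⁴`, and each is convex. -/
theorem diff_region_components (c u v : ℝ × ℝ)
    (hu : u ≠ 0) (hv : v ≠ 0) (huv : crossP u v ≠ 0) (hcd : c ∈ unitDisk)
    (R1 R2 R4 : Set (ℝ × ℝ))
    (hR1 : R1 = unitDisk ∩ {x | crossP u (x - c) > 0 ∧ crossP v (x - c) > 0})
    (hR2 : R2 = unitDisk ∩ {x | crossP u (x - c) < 0 ∧ crossP v (x - c) > 0})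
    (hR4 : R4 = unitDisk ∩ {x | crossP u (x - c) > 0 ∧ crossP v (x - c) < 0})
    (C : Set (ℝ × ℝ)) (hC : Convex ℝ C) (hCd : C ⊆ unitDisk) (hcC : c ∉ C)
    (comps : Set (Set (ℝ × ℝ)))
    (hcomps : comps = {T | ∃ x ∈ C \ R1, T = connectedComponentIn (C \ R1) x}) :
    comps.ncard ≤ 2 ∧
      (comps.ncard = 2 →
        comps = {C ∩ closure R2, C ∩ closure R4} ∧
        Convex ℝ (C ∩ closure R2) ∧ Convex ℝ (C ∩ closure R4)) :=
  diff_region_components_general c u v hu hv R1 R2 R4 hR1 hR2 hR4 C hC hCd comps hcomps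
end

section
/- Let C be a convex subset of the open unit disk, c ∉ C, where c is the intersection of crossing chords defining regions R¹,R²,R³,R⁴ in cyclic order. If C intersects both the closed region closure(R⁴) and the closed opposite-adjacent region closure(R³), and C also intersects R¹, then C ∩ R² = ∅, and hence C \ R¹ = C ∩ (closure(R³) ∪ closure(R⁴)) is convex. -/
open Set

section AffineQuadrants

variable {E : Type*} [AddCommGroup E] [Module ℝ E] [TopologicalSpace E] [ContinuousAdd E]
  [ContinuousSMul ℝ E] (φ ψ : E →ᴬ[ℝ] ℝ)

theorem closure_setOf_neg_and_neg {y : E} (hy : φ y < 0 ∧ ψ y < 0) :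
    closure {x | φ x < 0 ∧ ψ x < 0} = {x | φ x ≤ 0 ∧ ψ x ≤ 0} := by
  refine subset_antisymm (closure_minimal (fun x hx ↦ ⟨hx.1.le, hx.2.le⟩) ?_) ?_
  · exact (isClosed_le φ.cont continuous_const).inter (isClosed_le ψ.cont continuous_const)
  · rintro x ⟨hφx, hψx⟩
    refine closure_mono ?_ (segment_subset_closure_openSegment (left_mem_segment ℝ x y))
    rintro _ ⟨a, b, ha, hb, hab, rfl⟩
    have hcombo (f : E →ᴬ[ℝ] ℝ) (hfx : f x ≤ 0) (hfy : f y < 0) : f (a • x + b • y) < 0 := by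
      have hf := Convex.combo_affine_apply (x := x) (y := y) (f := f.toAffineMap) hab
      simp only [ContinuousAffineMap.coe_toAffineMap, smul_eq_mul] at hf
      rw [hf]
      nlinarith
    exact ⟨hcombo φ hφx hy.1, hcombo ψ hψx hy.2⟩

theorem inter_closure_inter_setOf_neg_and_neg {C D : Set E} (hD : IsOpen D) (hCD : C ⊆ D)
    {y : E} (hy : φ y < 0 ∧ ψ y < 0) :
    C ∩ closure (D ∩ {x | φ x < 0 ∧ ψ x < 0}) = C ∩ {x | φ x ≤ 0 ∧ ψ x ≤ 0} := by
  rw [← closure_setOf_neg_and_neg φ ψ hy]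
  refine subset_antisymm (inter_subset_inter_right C (closure_mono inter_subset_right)) ?_
  exact fun x hx ↦ ⟨hx.1, hD.inter_closure ⟨hCD hx.1, hx.2⟩⟩

variable {φ ψ} {C : Set E} (hC : Convex ℝ C) (hzero : ∀ x ∈ C, φ x = 0 → ψ x ≠ 0)
  {p q : E} (hp : p ∈ C) (hpφ : φ p ≤ 0) (hpψ : ψ p ≤ 0) (hq : q ∈ C) (hqφ : 0 ≤ φ q)
  (hqψ : ψ q ≤ 0)
include hC hzero hp hpφ hpψ hq hqφ hqψ

theorem Convex.apply_neg_of_apply_eq_zero {x : E} (hx : x ∈ C) (hφx : φ x = 0) : ψ x < 0 := by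
  obtain ⟨r, ⟨hr, hrψ⟩, hrφ⟩ : ∃ r ∈ C ∩ {x | ψ x ≤ 0}, φ r = 0 :=
    (hC.inter ((convex_Iic 0).affine_preimage ψ.toAffineMap)).isPreconnected.intermediate_value
      ⟨hp, hpψ⟩ ⟨hq, hqψ⟩ φ.cont.continuousOn ⟨hpφ, hqφ⟩
  by_contra! hψx
  obtain ⟨z, ⟨hz, hzφ⟩, hzψ⟩ : ∃ z ∈ C ∩ {x | φ x = 0}, ψ z = 0 :=
    (hC.inter ((convex_singleton 0).affine_preimage φ.toAffineMap)).isPreconnected.intermediate_value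
      ⟨hr, hrφ⟩ ⟨hx, hφx⟩ ψ.cont.continuousOn ⟨hrψ, hψx⟩
  exact hzero z hz hzφ hzψ

theorem Convex.apply_pos_of_apply_pos {r : E} (hr : r ∈ C) (hrφ : 0 < φ r) (hrψ : 0 < ψ r)
    {x : E} (hx : x ∈ C) (hψx : 0 < ψ x) : 0 < φ x := by
  by_contra! hφx
  obtain ⟨z, ⟨hz, hzψ⟩, hzφ⟩ : ∃ z ∈ C ∩ {x | 0 ≤ ψ x}, φ z = 0 :=
    (hC.inter ((convex_Ici 0).affine_preimage ψ.toAffineMap)).isPreconnected.intermediate_value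
      ⟨hx, hψx.le⟩ ⟨hr, hrψ.le⟩ φ.cont.continuousOn ⟨hφx, hrφ.le⟩
  exact (hC.apply_neg_of_apply_eq_zero hzero hp hpφ hpψ hq hqφ hqψ hz hzφ).not_ge hzψ

end AffineQuadrants

theorem eq_zero_of_crossP_eq_zero {u v w : ℝ × ℝ} (huv : crossP u v ≠ 0) (hu : crossP u w = 0)
    (hv : crossP v w = 0) : w = 0 := by
  unfold crossP at huv hu hv
  refine Prod.ext (mul_right_cancel₀ huv ?_) (mul_right_cancel₀ huv ?_)
  · rw [Prod.fst_zero]; linear_combination v.1 * hu - u.1 * hv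
  · rw [Prod.snd_zero]; linear_combination v.2 * hu - u.2 * hv

def crossPAffine (u c : ℝ × ℝ) : (ℝ × ℝ) →ᴬ[ℝ] ℝ where
  toFun x := crossP u (x - c)
  linear := u.1 • LinearMap.snd ℝ ℝ ℝ - u.2 • LinearMap.fst ℝ ℝ ℝ
  map_vadd' x w := by
    simp only [crossP, vadd_eq_add, LinearMap.sub_apply, LinearMap.smul_apply,
      LinearMap.fst_apply, LinearMap.snd_apply, Prod.fst_add, Prod.snd_add, Prod.fst_sub,
      Prod.snd_sub, smul_eq_mul]
    ring
  cont := by unfold crossP; fun_prop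

@[simp]
theorem crossPAffine_apply (u c x : ℝ × ℝ) : crossPAffine u c x = crossP u (x - c) := rfl

theorem exists_crossPAffine_eq {u v : ℝ × ℝ} (huv : crossP u v ≠ 0) (c : ℝ × ℝ) (s t : ℝ) :
    ∃ y, crossPAffine u c y = s ∧ crossPAffine v c y = t := by
  obtain ⟨k, hk⟩ : ∃ k, k * crossP u v = 1 := ⟨_, inv_mul_cancel₀ huv⟩
  refine ⟨c + k • (s • v - t • u), ?_, ?_⟩ <;>
    simp only [crossPAffine_apply, add_sub_cancel_left, crossP, Prod.smul_fst, Prod.smul_snd,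
      Prod.fst_sub, Prod.snd_sub, smul_eq_mul] at hk ⊢
  · linear_combination s * hk
  · linear_combination t * hk

theorem diff_region_convex_general (c u v : ℝ × ℝ)
    (huv : crossP u v ≠ 0)
    (R1 R2 R3 R4 : Set (ℝ × ℝ))
    (hR1 : R1 = unitDisk ∩ {x | crossP u (x - c) > 0 ∧ crossP v (x - c) > 0})
    (hR2 : R2 = unitDisk ∩ {x | crossP u (x - c) < 0 ∧ crossP v (x - c) > 0})
    (hR3 : R3 = unitDisk ∩ {x | crossP u (x - c) < 0 ∧ crossP v (x - c) < 0})
    (hR4 : R4 = unitDisk ∩ {x | crossP u (x - c) > 0 ∧ crossP v (x - c) < 0})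
    (C : Set (ℝ × ℝ)) (hC : Convex ℝ C) (hCd : C ⊆ unitDisk) (hcC : c ∉ C)
    (h4 : (C ∩ closure R4).Nonempty) (h3 : (C ∩ closure R3).Nonempty)
    (h1 : (C ∩ R1).Nonempty) :
    C ∩ R2 = ∅ ∧ C \ R1 = C ∩ (closure R3 ∪ closure R4) ∧
      Convex ℝ (C \ R1) := by
  set φ := crossPAffine u c
  set ψ := crossPAffine v c
  have hcl3 : C ∩ closure R3 = C ∩ {x | φ x ≤ 0 ∧ ψ x ≤ 0} := by
    obtain ⟨y, hφy, hψy⟩ := exists_crossPAffine_eq huv c (-1) (-1)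
    rw [hR3]
    exact inter_closure_inter_setOf_neg_and_neg φ ψ isOpen_unitDisk hCd (y := y)
      (by norm_num [φ, ψ, hφy, hψy])
  have hcl4 : C ∩ closure R4 = C ∩ {x | 0 ≤ φ x ∧ ψ x ≤ 0} := by
    obtain ⟨y, hφy, hψy⟩ := exists_crossPAffine_eq huv c 1 (-1)
    have := inter_closure_inter_setOf_neg_and_neg (-φ) ψ isOpen_unitDisk hCd (y := y)
      (by norm_num [φ, ψ, hφy, hψy])
    simp only [ContinuousAffineMap.neg_apply, neg_lt_zero, neg_nonpos] at this
    rwa [hR4]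
  have hzero : ∀ x ∈ C, φ x = 0 → ψ x ≠ 0 := fun x hx hφ hψ ↦
    hcC (sub_eq_zero.1 (eq_zero_of_crossP_eq_zero huv hφ hψ) ▸ hx)
  obtain ⟨p, hp, hpφ, hpψ⟩ := hcl3 ▸ h3
  obtain ⟨q, hq, hqφ, hqψ⟩ := hcl4 ▸ h4
  obtain ⟨r, hr, -, hrφ, hrψ⟩ := hR1 ▸ h1
  have hpos : ∀ x ∈ C, 0 < ψ x → 0 < φ x := fun _ ↦
    hC.apply_pos_of_apply_pos hzero hp hpφ hpψ hq hqφ hqψ hr hrφ hrψ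
  have hdiff : C \ R1 = C ∩ {x | ψ x ≤ 0} := by
    ext x
    rw [hR1]
    refine ⟨fun ⟨hx, hxR1⟩ ↦ ⟨hx, not_lt.1 fun hψ ↦ hxR1 ⟨hCd hx, hpos x hx hψ, hψ⟩⟩,
      fun ⟨hx, hψ⟩ ↦ ⟨hx, fun h ↦ hψ.not_gt h.2.2⟩⟩
  refine ⟨?_, ?_, ?_⟩
  · rw [hR2, eq_empty_iff_forall_notMem]
    exact fun x ⟨hx, _, hφ, hψ⟩ ↦ lt_asymm (hpos x hx hψ) hφ
  · rw [hdiff, inter_union_distrib_left, hcl3, hcl4, ← inter_union_distrib_left]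
    congr 1
    ext x
    simp only [mem_union, mem_ofPred_eq, ← or_and_right, le_total, true_and]
  · rw [hdiff]
    exact hC.inter ((convex_Iic 0).affine_preimage ψ.toAffineMap)

/-- let `R¹, R², R³, R⁴` (in cyclic order) be the four open regions
of the open unit disk determined by two chords crossing at `c`, and let `C` be a
convex subset of the open disk with `c ∉ C`.  If `C` meets `closure R⁴`,
`closure R³` and `R¹`, then `C ∩ R² = ∅`, and hence
`C \ R¹ = C ∩ (closure R³ ∪ closure R⁴)` is convex. -/
theorem diff_region_convex (c u v : ℝ × ℝ)
    (hu : u ≠ 0) (hv : v ≠ 0) (huv : crossP u v ≠ 0) (hcd : c ∈ unitDisk)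
    (R1 R2 R3 R4 : Set (ℝ × ℝ))
    (hR1 : R1 = unitDisk ∩ {x | crossP u (x - c) > 0 ∧ crossP v (x - c) > 0})
    (hR2 : R2 = unitDisk ∩ {x | crossP u (x - c) < 0 ∧ crossP v (x - c) > 0})
    (hR3 : R3 = unitDisk ∩ {x | crossP u (x - c) < 0 ∧ crossP v (x - c) < 0})
    (hR4 : R4 = unitDisk ∩ {x | crossP u (x - c) > 0 ∧ crossP v (x - c) < 0})
    (C : Set (ℝ × ℝ)) (hC : Convex ℝ C) (hCd : C ⊆ unitDisk) (hcC : c ∉ C)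
    (h4 : (C ∩ closure R4).Nonempty) (h3 : (C ∩ closure R3).Nonempty)
    (h1 : (C ∩ R1).Nonempty) :
    C ∩ R2 = ∅ ∧ C \ R1 = C ∩ (closure R3 ∪ closure R4) ∧
      Convex ℝ (C \ R1) :=
  diff_region_convex_general c u v huv R1 R2 R3 R4 hR1 hR2 hR3 hR4 C hC hCd hcC h4 h3 h1
end
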